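/- Let G be a hypo-efficient-domination graph possessing at least one γ-critical vertex. Then (δ(G)+1)(γ(G)−1) + 1 ≤ |V(G)| ≤ (Δ(G)+1)(γ(G)−1) + 1. -/

import Mathlib

open SimpleGraph

variable {V : Type*}

/-- `D` is a dominating set of `G`. -/
def IsDomSet (G : SimpleGraph V) (D : Finset V) : Prop :=
  ∀ v : V, ∃ u ∈ D, u = v ∨ G.Adj u v

/-- The domination number `γ(G)`. -/
noncomputable def domNum (G : SimpleGraph V) : ℕ :=
  sInf {n | ∃ D : Finset V, IsDomSet G D ∧ D.card = n}

/-- `D` is a minimum dominating set (γ-set) of `G`. -/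
def IsGammaSet (G : SimpleGraph V) (D : Finset V) : Prop :=
  IsDomSet G D ∧ D.card = domNum G

/-- The graph `G - x` obtained by deleting the vertex `x`. -/
def vdel (G : SimpleGraph V) (x : V) : SimpleGraph {u : V // u ≠ x} :=
  SimpleGraph.comap Subtype.val G

/-- `G` is a hypo-unique-domination graph: `G` has at least two γ-sets,
but `G - x` has a unique γ-set for every vertex `x`. -/
def HypoUD (G : SimpleGraph V) : Prop :=
  (∃ D₁ D₂ : Finset V, IsGammaSet G D₁ ∧ IsGammaSet G D₂ ∧ D₁ ≠ D₂) ∧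
  ∀ x : V, ∃! D : Finset {u : V // u ≠ x}, IsGammaSet (vdel G x) D

/-- `D` is an efficient dominating set of `G`: every vertex is dominated exactly once. -/
def IsEDS (G : SimpleGraph V) (D : Finset V) : Prop :=
  ∀ v : V, ∃! u : V, u ∈ D ∧ (u = v ∨ G.Adj u v)

/-- `G` is a hypo-efficient-domination graph: `G` has no EDS,
but `G - x` has an EDS for every vertex `x`. -/
def HypoED (G : SimpleGraph V) : Prop :=
  (¬ ∃ D : Finset V, IsEDS G D) ∧
  ∀ x : V, ∃ D : Finset {u : V // u ≠ x}, IsEDS (vdel G x) D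

/-!
Let `x` be a γ-critical vertex and `D` an efficient dominating set of `G - x`. An efficient
dominating set is a smallest dominating set, and adding `x` to a γ-set of `G - x` dominates `G`,
so `|D| = γ(G - x) = γ(G) - 1`. No vertex of `D` is adjacent to `x`, since otherwise `D` would
already dominate `G`; hence the closed neighbourhoods in `G` of the vertices of `D` partition
`V - x`, giving `|V| - 1 = ∑_{d ∈ D} (deg d + 1)`, which lies between `|D| (δ + 1)` and `|D| (Δ + 1)`.
-/

section Domination

variable {G : SimpleGraph V}

lemma domNum_le_card {D : Finset V} (hD : IsDomSet G D) : domNum G ≤ D.card :=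
  Nat.sInf_le ⟨D, hD, rfl⟩

lemma exists_isGammaSet [Fintype V] (G : SimpleGraph V) : ∃ D : Finset V, IsGammaSet G D :=
  Nat.sInf_mem (s := {n | ∃ D : Finset V, IsDomSet G D ∧ D.card = n})
    ⟨_, Finset.univ, fun v => ⟨v, Finset.mem_univ v, Or.inl rfl⟩, rfl⟩

lemma IsEDS.isDomSet {D : Finset V} (hD : IsEDS G D) : IsDomSet G D :=
  fun v => (hD v).exists

/-- Every vertex of an efficient dominating set `D` is dominated by some vertex of `S`, and two
vertices of `D` cannot be dominated by the same vertex, so this gives an injection `D → S`. -/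
lemma IsEDS.card_le_card {D S : Finset V} (hD : IsEDS G D) (hS : IsDomSet G S) :
    D.card ≤ S.card := by
  choose f hfS hfd using fun d => hS d
  refine Finset.card_le_card_of_injOn f (fun d _ => hfS d) fun d₁ hd₁ d₂ hd₂ heq => ?_
  have hd₂' : f d₁ = d₂ ∨ G.Adj (f d₁) d₂ := heq ▸ hfd d₂
  exact (hD (f d₁)).unique ⟨hd₁, (hfd d₁).imp Eq.symm G.adj_symm⟩
    ⟨hd₂, hd₂'.imp Eq.symm G.adj_symm⟩

lemma IsEDS.card_eq_domNum [Fintype V] {D : Finset V} (hD : IsEDS G D) :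
    D.card = domNum G := by
  obtain ⟨S, hS, hScard⟩ := exists_isGammaSet G
  exact le_antisymm (hScard ▸ hD.card_le_card hS) (domNum_le_card hD.isDomSet)

lemma IsEDS.card_eq_sum_degree [Fintype V] [DecidableEq V] [DecidableRel G.Adj] {D : Finset V}
    (hD : IsEDS G D) : Fintype.card V = ∑ d ∈ D, (G.degree d + 1) := by
  choose f hfD hfv using fun v => (hD v).exists
  rw [← Finset.card_univ, Finset.card_eq_sum_card_fiberwise (fun v _ => hfD v)]
  refine Finset.sum_congr rfl fun d hd => ?_
  have hfiber : ({v | f v = d} : Finset V) = insert d (G.neighborFinset d) := by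
    ext v
    simp only [Finset.mem_filter, Finset.mem_univ, true_and, Finset.mem_insert,
      mem_neighborFinset]
    constructor
    · rintro rfl
      exact (hfv v).imp Eq.symm id
    · exact fun h => (hD v).unique ⟨hfD v, hfv v⟩ ⟨hd, h.imp Eq.symm id⟩
  rw [hfiber, Finset.card_insert_of_notMem (by simp), card_neighborFinset_eq_degree]

end Domination

section VertexDeletion

variable {G : SimpleGraph V} {x : V}

instance vdel.instDecidableRelAdj (G : SimpleGraph V) [DecidableRel G.Adj] (x : V) :
    DecidableRel (vdel G x).Adj :=
  fun a b => inferInstanceAs (Decidable (G.Adj a b))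

lemma IsDomSet.insert_image_val [DecidableEq V] {S : Finset {u : V // u ≠ x}}
    (hS : IsDomSet (vdel G x) S) : IsDomSet G (insert x (S.image Subtype.val)) := by
  intro v
  by_cases hv : v = x
  · exact ⟨x, Finset.mem_insert_self _ _, Or.inl hv.symm⟩
  · obtain ⟨u, hu, huv⟩ := hS ⟨v, hv⟩
    exact ⟨u, Finset.mem_insert_of_mem (Finset.mem_image_of_mem _ hu),
      huv.imp (congrArg Subtype.val) id⟩

lemma domNum_le_domNum_vdel_add_one [Fintype V] [DecidableEq V] (G : SimpleGraph V) (x : V) :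
    domNum G ≤ domNum (vdel G x) + 1 := by
  obtain ⟨S, hS, hScard⟩ := exists_isGammaSet (vdel G x)
  calc domNum G ≤ (insert x (S.image Subtype.val)).card := domNum_le_card hS.insert_image_val
    _ ≤ (S.image Subtype.val).card + 1 := Finset.card_insert_le _ _
    _ ≤ S.card + 1 := by gcongr; exact Finset.card_image_le
    _ = domNum (vdel G x) + 1 := by rw [hScard]

lemma IsDomSet.image_val_of_adj [DecidableEq V] {D : Finset {u : V // u ≠ x}}
    (hD : IsDomSet (vdel G x) D) {d : {u : V // u ≠ x}} (hd : d ∈ D) (hdx : G.Adj d x) :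
    IsDomSet G (D.image Subtype.val) := by
  intro v
  by_cases hv : v = x
  · exact ⟨d, Finset.mem_image_of_mem _ hd, Or.inr (hv ▸ hdx)⟩
  · obtain ⟨u, hu, huv⟩ := hD ⟨v, hv⟩
    exact ⟨u, Finset.mem_image_of_mem _ hu, huv.imp (congrArg Subtype.val) id⟩

lemma IsDomSet.not_adj_of_card_lt_domNum {D : Finset {u : V // u ≠ x}}
    (hD : IsDomSet (vdel G x) D) (hcard : D.card < domNum G) {d : {u : V // u ≠ x}}
    (hd : d ∈ D) : ¬ G.Adj d x := by
  classical
  intro hdx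
  have := domNum_le_card (hD.image_val_of_adj hd hdx)
  have := D.card_image_le (f := Subtype.val)
  omega

lemma degree_vdel_of_not_adj [Fintype V] [DecidableEq V] [DecidableRel G.Adj]
    {v : {u : V // u ≠ x}} (hvx : ¬ G.Adj v x) : (vdel G x).degree v = G.degree v := by
  rw [← card_neighborFinset_eq_degree, ← card_neighborFinset_eq_degree]
  refine Finset.card_nbij Subtype.val (fun u hu => by rw [Finset.mem_coe, mem_neighborFinset] at hu ⊢; exact hu)
    Subtype.val_injective.injOn fun w hw => ?_
  have hw : G.Adj v w := by simpa using hw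
  exact ⟨⟨w, fun h => hvx (h ▸ hw)⟩, (mem_neighborFinset _ _ _).2 hw, rfl⟩

lemma card_eq_sum_degree_of_isEDS_vdel [Fintype V] [DecidableEq V] [DecidableRel G.Adj]
    {D : Finset {u : V // u ≠ x}} (hD : IsEDS (vdel G x) D) (hDx : ∀ d ∈ D, ¬ G.Adj d x) :
    Fintype.card V = ∑ d ∈ D, (G.degree d + 1) + 1 := by
  have hcard : Fintype.card {u : V // u ≠ x} + 1 = Fintype.card V := by
    rw [Fintype.card_subtype_compl, Fintype.card_subtype_eq]
    exact Nat.sub_add_cancel (Fintype.card_pos_iff.2 ⟨x⟩)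
  rw [← hcard, hD.card_eq_sum_degree]
  congr 1
  exact Finset.sum_congr rfl fun d hd => by rw [degree_vdel_of_not_adj (hDx d hd)]

end VertexDeletion

section DegreeBounds

variable {ι : Type*} [Fintype V] (G : SimpleGraph V) [DecidableRel G.Adj] (s : Finset ι)
  (f : ι → V)

lemma card_mul_minDegree_add_one_le_sum :
    s.card * (G.minDegree + 1) ≤ ∑ i ∈ s, (G.degree (f i) + 1) := by
  simpa using s.card_nsmul_le_sum _ _ fun i _ =>
    Nat.add_le_add_right (G.minDegree_le_degree (f i)) 1

lemma sum_le_card_mul_maxDegree_add_one :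
    ∑ i ∈ s, (G.degree (f i) + 1) ≤ s.card * (G.maxDegree + 1) := by
  simpa using s.sum_le_card_nsmul _ _ fun i _ =>
    Nat.add_le_add_right (G.degree_le_maxDegree (f i)) 1

end DegreeBounds

theorem hypoED_critical_order_bounds_general [Fintype V]
    (G : SimpleGraph V) [DecidableRel G.Adj] (hED : HypoED G)
    (hx : ∃ x : V, domNum (vdel G x) < domNum G) :
    (G.minDegree + 1) * (domNum G - 1) + 1 ≤ Fintype.card V ∧
      Fintype.card V ≤ (G.maxDegree + 1) * (domNum G - 1) + 1 := by
  classical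
  obtain ⟨x, hcrit⟩ := hx
  obtain ⟨D, hD⟩ := hED.2 x
  have hDγ : D.card = domNum (vdel G x) := hD.card_eq_domNum
  have hDcard : D.card = domNum G - 1 := by
    have := domNum_le_domNum_vdel_add_one G x
    omega
  have hDx : ∀ d ∈ D, ¬ G.Adj d x := fun d hd =>
    hD.isDomSet.not_adj_of_card_lt_domNum (hDγ ▸ hcrit) hd
  have hV := card_eq_sum_degree_of_isEDS_vdel hD hDx
  have hlow := card_mul_minDegree_add_one_le_sum G D Subtype.val
  have hhigh := sum_le_card_mul_maxDegree_add_one G D Subtype.val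
  rw [hDcard] at hlow hhigh
  constructor <;> linarith

theorem hypoED_critical_order_bounds [Fintype V] [DecidableEq V]
    (G : SimpleGraph V) [DecidableRel G.Adj] (hED : HypoED G)
    (hx : ∃ x : V, domNum (vdel G x) < domNum G) :
    (G.minDegree + 1) * (domNum G - 1) + 1 ≤ Fintype.card V ∧
      Fintype.card V ≤ (G.maxDegree + 1) * (domNum G - 1) + 1 :=
  hypoED_critical_order_bounds_general G hED hx
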